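/- arXiv:math/0606614 — 2 statements merged into one kernel-verified Lean document; each statement's English description precedes it below -/
import Mathlib

section
/- Let K be a division ring with endomorphism S and S-derivation D, and let x₁, x₂ ∈ K with x₁ ≠ x₂. Then (t − x₁^{x₁−x₂})(t − x₂) = (t − x₂^{x₂−x₁})(t − x₁) in K[t;S,D], and this polynomial is the least left common multiple of t − x₁ and t − x₂. -/
/-- The `(S,D)`-conjugate `a^c := S(c)·a·c⁻¹ + D(c)·c⁻¹`. -/
def sdConj {K : Type*} [DivisionRing K] (S : K →+* K) (D : K →+ K) (a c : K) : K :=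
  S c * a * c⁻¹ + D c * c⁻¹

/-- `R` together with `ι : K →+* R` and `t : R` is the skew polynomial ring `K[t;S,D]`:
the commutation rule `t·a = S(a)t + D(a)` holds and every element of `R` is uniquely a
polynomial `Σ ι(cᵢ)·tⁱ`. -/
def IsSkewPolyRing {K R : Type*} [DivisionRing K] [Ring R] (S : K →+* K) (D : K →+ K)
    (ι : K →+* R) (t : R) : Prop :=
  (∀ a : K, t * ι a = ι (S a) * t + ι (D a)) ∧
  (∀ r : R, ∃! c : ℕ →₀ K, r = c.sum fun i k => ι k * t ^ i)

/-- The coefficients of `r ∈ K[t;S,D]`. -/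
noncomputable def coeffs {K R : Type*} [DivisionRing K] [Ring R] {S : K →+* K} {D : K →+ K}
    {ι : K →+* R} {t : R} (h : IsSkewPolyRing S D ι t) (r : R) : ℕ →₀ K :=
  (h.2 r).choose

/-- The degree of `r ∈ K[t;S,D]` (with `deg 0 = 0`). -/
noncomputable def sdeg {K R : Type*} [DivisionRing K] [Ring R] {S : K →+* K} {D : K →+ K}
    {ι : K →+* R} {t : R} (h : IsSkewPolyRing S D ι t) (r : R) : ℕ :=
  (coeffs h r).support.sup id

/-- `r ∈ K[t;S,D]` is monic: its leading coefficient is `1`. -/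
noncomputable def SMonic {K R : Type*} [DivisionRing K] [Ring R] {S : K →+* K} {D : K →+ K}
    {ι : K →+* R} {t : R} (h : IsSkewPolyRing S D ι t) (r : R) : Prop :=
  coeffs h r (sdeg h r) = 1

/-!
Conjugation intertwines linear factors: `(t - a^c) * c = S(c) * (t - a)`. Writing
`t - x₂ = (t - x₁) + c` with `c = x₁ - x₂`, and using `x₁^c - x₂^c = S(c)` and `a^(-c) = a^c`,
this gives the factorisation identity.

For the lcm, a common left multiple `r = u (t - x₁)` is reduced by right division
`u = q (t - x₂^c) + k`, so `r - q g = k (t - x₁)` lies in `R (t - x₂)`. Subtracting `k (t - x₂)`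
leaves the constant `k (x₂ - x₁)` in `R (t - x₂)`, which forces `k = 0` because a nonzero
`w (t - x)` has degree `deg w + 1`.
-/

section sdConj

variable {K : Type*} [DivisionRing K] (S : K →+* K) (D : K →+ K)

theorem sdConj_neg (a c : K) : sdConj S D a (-c) = sdConj S D a c := by
  simp [sdConj, inv_neg]

theorem sdConj_sub_sdConj (a b c : K) :
    sdConj S D a c - sdConj S D b c = S c * (a - b) * c⁻¹ := by
  simp only [sdConj]
  noncomm_ring

end sdConj

namespace IsSkewPolyRing

variable {K R : Type*} [DivisionRing K] [Ring R] {S : K →+* K} {D : K →+ K}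
  {ι : K →+* R} {t : R}

def ofCoeffs (ι : K →+* R) (t : R) : (ℕ →₀ K) →+ R where
  toFun c := c.sum fun i k => ι k * t ^ i
  map_zero' := Finsupp.sum_zero_index
  map_add' _ _ := Finsupp.sum_add_index' (fun _ => by simp) fun _ _ _ => by simp [add_mul]

theorem ofCoeffs_apply (c : ℕ →₀ K) : ofCoeffs ι t c = c.sum fun i k => ι k * t ^ i := rfl

theorem ofCoeffs_single (i : ℕ) (k : K) : ofCoeffs ι t (Finsupp.single i k) = ι k * t ^ i := by
  rw [ofCoeffs_apply, Finsupp.sum_single_index (by simp)]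

theorem ofCoeffs_mapDomain_succ (c : ℕ →₀ K) :
    ofCoeffs ι t (c.mapDomain (· + 1)) = ofCoeffs ι t c * t := by
  rw [ofCoeffs_apply, ofCoeffs_apply, Finsupp.sum_mapDomain_index_inj (add_left_injective 1),
    Finsupp.sum_mul]
  exact Finset.sum_congr rfl fun i _ => by simp only [pow_succ, mul_assoc]

variable (h : IsSkewPolyRing S D ι t)
include h

theorem ofCoeffs_coeffs (r : R) : ofCoeffs ι t (coeffs h r) = r :=
  (h.2 r).choose_spec.1.symm

theorem coeffs_eq_iff {r : R} {c : ℕ →₀ K} : coeffs h r = c ↔ r = ofCoeffs ι t c :=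
  ⟨fun hc => by rw [← hc, ofCoeffs_coeffs], fun hc => ((h.2 r).choose_spec.2 c hc).symm⟩

theorem coeffs_zero : coeffs h (0 : R) = 0 :=
  (coeffs_eq_iff h).2 (map_zero _).symm

theorem coeffs_add (r s : R) : coeffs h (r + s) = coeffs h r + coeffs h s :=
  (coeffs_eq_iff h).2 (by rw [map_add, ofCoeffs_coeffs, ofCoeffs_coeffs])

theorem coeffs_neg (r : R) : coeffs h (-r) = -coeffs h r :=
  (coeffs_eq_iff h).2 (by rw [map_neg, ofCoeffs_coeffs])

theorem coeffs_sub (r s : R) : coeffs h (r - s) = coeffs h r - coeffs h s := by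
  rw [sub_eq_add_neg, coeffs_add, coeffs_neg, sub_eq_add_neg]

theorem coeffs_ι_mul_pow (k : K) (i : ℕ) : coeffs h (ι k * t ^ i) = Finsupp.single i k :=
  (coeffs_eq_iff h).2 (ofCoeffs_single i k).symm

theorem coeffs_ι (k : K) : coeffs h (ι k) = Finsupp.single 0 k := by
  rw [← coeffs_ι_mul_pow h k 0, pow_zero, mul_one]

theorem coeffs_mul_t (r : R) : coeffs h (r * t) = (coeffs h r).mapDomain (· + 1) :=
  (coeffs_eq_iff h).2 (by rw [ofCoeffs_mapDomain_succ, ofCoeffs_coeffs])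

theorem coeffs_mul_t_succ (r : R) (i : ℕ) : coeffs h (r * t) (i + 1) = coeffs h r i := by
  rw [coeffs_mul_t, Finsupp.mapDomain_apply (add_left_injective 1)]

theorem exists_eq_mul_sub_add (a : K) (r : R) : ∃ q : R, ∃ k : K, r = q * (t - ι a) + ι k := by
  have pow (i : ℕ) : ∃ q : R, ∃ k : K, t ^ i = q * (t - ι a) + ι k := by
    induction i with
    | zero => exact ⟨0, 1, by simp⟩
    | succ i ih =>
      obtain ⟨q, k, hq⟩ := ih
      refine ⟨t * q + ι (S k), S k * a + D k, ?_⟩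
      rw [pow_succ', hq, mul_add, h.1 k, map_add, map_mul]
      noncomm_ring
  rw [← ofCoeffs_coeffs h r, ofCoeffs_apply]
  refine Finset.sum_induction _ (fun r => ∃ q : R, ∃ k : K, r = q * (t - ι a) + ι k) ?_
    ⟨0, 0, by simp⟩ fun i _ => ?_
  · rintro _ _ ⟨q, k, rfl⟩ ⟨q', k', rfl⟩
    exact ⟨q + q', k + k', by rw [map_add]; noncomm_ring⟩
  · obtain ⟨q, k, hq⟩ := pow i
    exact ⟨ι (coeffs h r i) * q, coeffs h r i * k, by simp only [hq, map_mul]; noncomm_ring⟩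

def degreeLE (n : ℕ) : AddSubgroup R where
  carrier := {r | ∀ j, n < j → coeffs h r j = 0}
  zero_mem' _ _ := by rw [coeffs_zero]; rfl
  add_mem' hr hs j hj := by rw [coeffs_add, Finsupp.add_apply, hr j hj, hs j hj, add_zero]
  neg_mem' hr j hj := by rw [coeffs_neg, Finsupp.neg_apply, hr j hj, neg_zero]

theorem degreeLE_mono {n m : ℕ} (hnm : n ≤ m) : degreeLE h n ≤ degreeLE h m :=
  fun _ hr j hj => hr j (lt_of_le_of_lt hnm hj)

theorem ι_mul_pow_mem_degreeLE (k : K) {i n : ℕ} (hi : i ≤ n) : ι k * t ^ i ∈ degreeLE h n :=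
  fun j hj => by rw [coeffs_ι_mul_pow, Finsupp.single_eq_of_ne (by omega)]

theorem mul_t_mem_degreeLE {r : R} {n : ℕ} (hr : r ∈ degreeLE h n) :
    r * t ∈ degreeLE h (n + 1) := by
  intro j hj
  obtain ⟨i, rfl⟩ : ∃ i, j = i + 1 := ⟨j - 1, by omega⟩
  rw [coeffs_mul_t_succ]
  exact hr i (by omega)

theorem ι_mul_pow_mul_ι_mem_degreeLE (c a : K) (m : ℕ) : ι c * t ^ m * ι a ∈ degreeLE h m := by
  induction m generalizing a with
  | zero =>
    simpa using ι_mul_pow_mem_degreeLE h (c * a) (le_refl 0)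
  | succ m ih =>
    rw [pow_succ, ← mul_assoc, mul_assoc (ι c * t ^ m), h.1 a, mul_add, ← mul_assoc]
    exact add_mem (mul_t_mem_degreeLE h (ih _)) (degreeLE_mono h m.le_succ (ih _))

theorem mul_ι_mem_degreeLE {r : R} {n : ℕ} (hr : r ∈ degreeLE h n) (a : K) :
    r * ι a ∈ degreeLE h n := by
  rw [← ofCoeffs_coeffs h r, ofCoeffs_apply, Finsupp.sum, Finset.sum_mul]
  refine AddSubgroup.sum_mem _ fun i hi => ?_
  refine degreeLE_mono h ?_ (ι_mul_pow_mul_ι_mem_degreeLE h _ a i)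
  by_contra hin
  exact Finsupp.mem_support_iff.1 hi (hr i (by omega))

theorem mem_degreeLE_sdeg (r : R) : r ∈ degreeLE h (sdeg h r) := fun _ hj =>
  Finsupp.notMem_support_iff.1 fun hmem =>
    absurd (Finset.le_sup (f := id) hmem) (not_le.2 hj)

theorem coeffs_sdeg_ne_zero {r : R} (hr : r ≠ 0) : coeffs h r (sdeg h r) ≠ 0 := by
  have hne : (coeffs h r).support.Nonempty := Finsupp.support_nonempty_iff.2 fun h0 =>
    hr (by rw [← ofCoeffs_coeffs h r, h0, map_zero])
  obtain ⟨i, hi, hsup⟩ := Finset.exists_mem_eq_sup _ hne id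
  rw [sdeg, hsup]
  exact Finsupp.mem_support_iff.1 hi

theorem eq_zero_of_ι_mem_span_sub {e x : K} (he : ι e ∈ Ideal.span {t - ι x}) : e = 0 := by
  obtain ⟨w, hw⟩ := Ideal.mem_span_singleton'.1 he
  obtain rfl : w = 0 := by
    by_contra hw0
    set n := sdeg h w
    have top : coeffs h (w * (t - ι x)) (n + 1) = coeffs h w n := by
      rw [mul_sub, coeffs_sub, Finsupp.sub_apply, coeffs_mul_t_succ,
        mul_ι_mem_degreeLE h (mem_degreeLE_sdeg h w) x (n + 1) n.lt_succ_self, sub_zero]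
    rw [hw, coeffs_ι, Finsupp.single_eq_of_ne (by omega)] at top
    exact coeffs_sdeg_ne_zero h hw0 top.symm
  simpa [coeffs_ι, coeffs_zero] using congr(coeffs h $hw 0).symm

theorem sub_sdConj_mul {a c : K} (hc : c ≠ 0) :
    (t - ι (sdConj S D a c)) * ι c = ι (S c) * (t - ι a) := by
  have hconj : sdConj S D a c * c = S c * a + D c := by
    simp only [sdConj, add_mul, mul_assoc, inv_mul_cancel₀ hc, mul_one]
  rw [sub_mul, h.1 c, ← map_mul, hconj, map_add, map_mul]
  noncomm_ring

theorem sub_sdConj_mul_sub_comm {x₁ x₂ : K} (hx : x₁ ≠ x₂) :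
    (t - ι (sdConj S D x₁ (x₁ - x₂))) * (t - ι x₂) =
      (t - ι (sdConj S D x₂ (x₂ - x₁))) * (t - ι x₁) := by
  set c := x₁ - x₂
  have hc : c ≠ 0 := sub_ne_zero.2 hx
  have hdiff : sdConj S D x₁ c - sdConj S D x₂ c = S c := by
    rw [sdConj_sub_sdConj, mul_assoc, mul_inv_cancel₀ hc, mul_one]
  rw [show x₂ - x₁ = -c by simp [c], sdConj_neg, show t - ι x₂ = (t - ι x₁) + ι c by
    simp [c], mul_add, sub_sdConj_mul h hc, ← add_mul, ← hdiff, map_sub,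
    sub_add_sub_cancel]

theorem smonic_of_sub_pow_mem_degreeLE {r : R} {n : ℕ}
    (hr : r - t ^ (n + 1) ∈ degreeLE h n) : SMonic h r := by
  have hcoeffs : coeffs h r = coeffs h (r - t ^ (n + 1)) + Finsupp.single (n + 1) 1 := by
    rw [← coeffs_ι_mul_pow h 1 (n + 1), map_one, one_mul, ← coeffs_add, sub_add_cancel]
  have top : coeffs h r (n + 1) = 1 := by
    rw [hcoeffs, Finsupp.add_apply, hr _ n.lt_succ_self, Finsupp.single_eq_same, zero_add]
  have hdeg : sdeg h r = n + 1 := by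
    refine le_antisymm (Finset.sup_le fun j hj => ?_)
      (Finset.le_sup (f := id) (Finsupp.mem_support_iff.2 (top ▸ one_ne_zero)))
    show j ≤ n + 1
    by_contra! hj'
    refine Finsupp.mem_support_iff.1 hj ?_
    rw [hcoeffs, Finsupp.add_apply, hr j (by omega), Finsupp.single_eq_of_ne (by omega), add_zero]
  rw [SMonic, hdeg, top]

theorem smonic_sub_mul_sub (a b : K) : SMonic h ((t - ι a) * (t - ι b)) := by
  refine smonic_of_sub_pow_mem_degreeLE h (n := 1) ?_
  have hexpand : (t - ι a) * (t - ι b) - t ^ (1 + 1) =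
      ι (a * b) * t ^ 0 - (ι 1 * t ^ 1 * ι b + ι a * t ^ 1) := by
    simp only [map_mul, map_one]
    noncomm_ring
  rw [hexpand]
  exact sub_mem (ι_mul_pow_mem_degreeLE h _ zero_le_one)
    (add_mem (ι_mul_pow_mul_ι_mem_degreeLE h 1 b 1) (ι_mul_pow_mem_degreeLE h a le_rfl))

theorem span_mul_eq_inf_span {a₁ a₂ x₁ x₂ : K} (hx : x₁ ≠ x₂)
    (hg : (t - ι a₁) * (t - ι x₂) = (t - ι a₂) * (t - ι x₁)) :
    Ideal.span {(t - ι a₁) * (t - ι x₂)} = Ideal.span {t - ι x₁} ⊓ Ideal.span {t - ι x₂} := by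
  have hg₁ : (t - ι a₁) * (t - ι x₂) ∈ Ideal.span {t - ι x₁} :=
    Ideal.mem_span_singleton'.2 ⟨_, hg.symm⟩
  have hg₂ : (t - ι a₁) * (t - ι x₂) ∈ Ideal.span {t - ι x₂} :=
    Ideal.mem_span_singleton'.2 ⟨_, rfl⟩
  refine le_antisymm (Ideal.span_le.2 (Set.singleton_subset_iff.2 ⟨hg₁, hg₂⟩)) ?_
  rintro r ⟨hr₁, hr₂⟩
  obtain ⟨u, rfl⟩ := Ideal.mem_span_singleton'.1 hr₁
  obtain ⟨q, k, rfl⟩ := exists_eq_mul_sub_add h a₂ u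
  have hrem : ι k * (t - ι x₁) ∈ Ideal.span {t - ι x₂} := by
    have := sub_mem hr₂ (Ideal.mul_mem_left _ q hg₂)
    rwa [hg, add_mul, mul_assoc, add_sub_cancel_left] at this
  have hconst : ι (k * (x₂ - x₁)) ∈ Ideal.span {t - ι x₂} := by
    have := sub_mem hrem (Ideal.mul_mem_left _ (ι k) (Ideal.mem_span_singleton_self _))
    rwa [← mul_sub, sub_sub_sub_cancel_left, ← map_sub, ← map_mul] at this
  obtain rfl : k = 0 := (mul_eq_zero.1 (eq_zero_of_ι_mem_span_sub h hconst)).resolve_right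
    (sub_ne_zero.2 hx.symm)
  rw [map_zero, add_zero, mul_assoc, ← hg]
  exact Ideal.mul_mem_left _ q (Ideal.mem_span_singleton_self _)

end IsSkewPolyRing

theorem llcm_two_linear_general {K R : Type*} [DivisionRing K] [Ring R] (S : K →+* K) (D : K →+ K)
    (ι : K →+* R) (t : R) (h : IsSkewPolyRing S D ι t)
    (x₁ x₂ : K) (hx : x₁ ≠ x₂) :
    (t - ι (sdConj S D x₁ (x₁ - x₂))) * (t - ι x₂) =
        (t - ι (sdConj S D x₂ (x₂ - x₁))) * (t - ι x₁) ∧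
    SMonic h ((t - ι (sdConj S D x₁ (x₁ - x₂))) * (t - ι x₂)) ∧
    Ideal.span {(t - ι (sdConj S D x₁ (x₁ - x₂))) * (t - ι x₂)} =
      Ideal.span {t - ι x₁} ⊓ Ideal.span {t - ι x₂} :=
  have hg := h.sub_sdConj_mul_sub_comm hx
  ⟨hg, h.smonic_sub_mul_sub _ _, h.span_mul_eq_inf_span hx hg⟩

/-- For `x₁ ≠ x₂`, `(t − x₁^{x₁−x₂})(t − x₂) = (t − x₂^{x₂−x₁})(t − x₁)` in `K[t;S,D]`,
and this polynomial is the (monic) least left common multiple of `t − x₁` and `t − x₂`. -/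
theorem llcm_two_linear {K R : Type*} [DivisionRing K] [Ring R] (S : K →+* K) (D : K →+ K)
    (hD : ∀ a b : K, D (a * b) = S a * D b + D a * b)
    (ι : K →+* R) (t : R) (h : IsSkewPolyRing S D ι t)
    (x₁ x₂ : K) (hx : x₁ ≠ x₂) :
    (t - ι (sdConj S D x₁ (x₁ - x₂))) * (t - ι x₂) =
        (t - ι (sdConj S D x₂ (x₂ - x₁))) * (t - ι x₁) ∧
    SMonic h ((t - ι (sdConj S D x₁ (x₁ - x₂))) * (t - ι x₂)) ∧
    Ideal.span {(t - ι (sdConj S D x₁ (x₁ - x₂))) * (t - ι x₂)} =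
      Ideal.span {t - ι x₁} ⊓ Ideal.span {t - ι x₂} :=
  llcm_two_linear_general S D ι t h x₁ x₂ hx
end

section
/- Let K be a division ring, S an endomorphism, D an S-derivation, a ∈ K, and C(a) the (S,D)-centralizer of a. For any f ∈ K[t;S,D], the map f(Tₐ) : K → K (where Tₐ(x) = S(x)a + D(x)) is right C(a)-linear: f(Tₐ)(x + y) = f(Tₐ)(x) + f(Tₐ)(y) and f(Tₐ)(x·c) = f(Tₐ)(x)·c for all x, y ∈ K and c ∈ C(a). -/
/-- The pseudo-linear map `Tₐ(x) = S(x)a + D(x)`. -/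
def sdT {K : Type*} [DivisionRing K] (S : K →+* K) (D : K →+ K) (a x : K) : K :=
  S x * a + D x

/-- The `(S,D)`-centralizer of `a`. -/
def sdCentralizer {K : Type*} [DivisionRing K] (S : K →+* K) (D : K →+ K) (a : K) : Set K :=
  {x | x = 0 ∨ S x * a * x⁻¹ + D x * x⁻¹ = a}

private lemma sdT_add {K : Type*} [DivisionRing K] (S : K →+* K) (D : K →+ K) (a : K)
    (x y : K) : sdT S D a (x + y) = sdT S D a x + sdT S D a y := by
  simp only [sdT, map_add, add_mul]; abel

private lemma sdT_iter_add {K : Type*} [DivisionRing K] (S : K →+* K) (D : K →+ K) (a : K)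
    (n : ℕ) (x y : K) :
    (sdT S D a)^[n] (x + y) = (sdT S D a)^[n] x + (sdT S D a)^[n] y := by
  induction n generalizing x y with
  | zero => simp
  | succ n ih => simp [Function.iterate_succ_apply, sdT_add, ih]

private lemma sdT_mul {K : Type*} [DivisionRing K] (S : K →+* K) (D : K →+ K)
    (hD : ∀ a b : K, D (a * b) = S a * D b + D a * b) (a : K)
    (c : K) (hc : c ∈ sdCentralizer S D a) (x : K) :
    sdT S D a (x * c) = sdT S D a x * c := by
  rcases hc with h0 | h
  · simp [h0, sdT, map_zero]
  rcases eq_or_ne c 0 with rfl | hc0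
  · simp [sdT, map_zero]
  have key : S c * a + D c = a * c := by
    have := congrArg (· * c) h
    simpa [add_mul, mul_assoc, inv_mul_cancel₀ hc0] using this
  calc sdT S D a (x * c) = S x * (S c * a + D c) + D x * c := by
        simp only [sdT, map_mul, hD, mul_add, mul_assoc]; abel
    _ = sdT S D a x * c := by rw [key]; simp only [sdT, add_mul, mul_assoc]

private lemma sdT_iter_mul {K : Type*} [DivisionRing K] (S : K →+* K) (D : K →+ K)
    (hD : ∀ a b : K, D (a * b) = S a * D b + D a * b) (a : K)
    (c : K) (hc : c ∈ sdCentralizer S D a) (n : ℕ) (x : K) :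
    (sdT S D a)^[n] (x * c) = (sdT S D a)^[n] x * c := by
  induction n generalizing x with
  | zero => simp
  | succ n ih => simp [Function.iterate_succ_apply, sdT_mul S D hD a c hc, ih]

/-- For `f = Σ aᵢtⁱ`, the map `f(Tₐ) = Σ aᵢTₐⁱ` is right `C(a)`-linear:
additive, and `f(Tₐ)(x·c) = f(Tₐ)(x)·c` for `c ∈ C(a)`. -/
theorem fT_right_linear {K : Type*} [DivisionRing K] (S : K →+* K) (D : K →+ K)
    (hD : ∀ a b : K, D (a * b) = S a * D b + D a * b)
    (f : ℕ →₀ K) (a : K) :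
    (∀ x y : K, (f.sum fun i k => k * (sdT S D a)^[i] (x + y)) =
        (f.sum fun i k => k * (sdT S D a)^[i] x) +
        (f.sum fun i k => k * (sdT S D a)^[i] y)) ∧
    (∀ x : K, ∀ c ∈ sdCentralizer S D a,
      (f.sum fun i k => k * (sdT S D a)^[i] (x * c)) =
        (f.sum fun i k => k * (sdT S D a)^[i] x) * c) := by
  constructor
  · intro x y
    rw [← Finsupp.sum_add]
    exact Finsupp.sum_congr fun i _ => by rw [sdT_iter_add, mul_add]
  · intro x c hc
    rw [Finsupp.sum_mul]
    exact Finsupp.sum_congr fun i _ => by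
      rw [sdT_iter_mul S D hD a c hc, mul_assoc]
end
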